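/- arXiv:2210.04011 — 7 statements merged into one kernel-verified Lean document; each statement's English description precedes it below -/
import Mathlib

section
/- If S solves S'(t) = -(p+q)S + q e^{-pt} S with S(0)=1, then u_n(t) := e^{-(n-1)pt} S(t) satisfies the infinite system u_n'(t) = -(np+q)u_n + q u_{n+1} with u_n(0)=1 for every n ≥ 1. -/
open Real

/-! Multiplying by `exp (-(n - 1) p t)` shifts the decay rate by `(n - 1) p`, and the factor
`exp (-p t)` in the equation for `S` raises the index by one: `exp (-(n - 1) p t) exp (-p t) = exp (-n p t)`. -/

theorem hasDerivAt_exp_mul {S : ℝ → ℝ} {S' c t : ℝ} (hS : HasDerivAt S S' t) :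
    HasDerivAt (fun t => exp (c * t) * S t) (c * (exp (c * t) * S t) + exp (c * t) * S') t := by
  have hexp : HasDerivAt (fun t => exp (c * t)) (exp (c * t) * c) t :=
    ((hasDerivAt_id t).const_mul c).exp.congr_deriv (by simp)
  exact (hexp.mul hS).congr_deriv (by ring)

theorem hasDerivAt_exp_shift_mul_of_ode {p q : ℝ} {S : ℝ → ℝ}
    (hS : ∀ t : ℝ, HasDerivAt S (-(p + q) * S t + q * exp (-p * t) * S t) t) (n t : ℝ) :
    HasDerivAt (fun t => exp (-(n - 1) * p * t) * S t)
      (-(n * p + q) * (exp (-(n - 1) * p * t) * S t)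
        + q * (exp (-((n + 1) - 1) * p * t) * S t)) t := by
  have hshift : exp (-((n + 1) - 1) * p * t) = exp (-(n - 1) * p * t) * exp (-p * t) := by
    rw [← exp_add]; ring_nf
  refine (hasDerivAt_exp_mul (c := -(n - 1) * p) (hS t)).congr_deriv ?_
  rw [hshift]; ring

theorem circle_ansatz_closes_infinite_system_general (p q : ℝ)
    (S : ℝ → ℝ) (hS0 : S 0 = 1)
    (hS : ∀ t : ℝ, HasDerivAt S (-(p + q) * S t + q * Real.exp (-p * t) * S t) t) :
    ∀ n : ℕ, 1 ≤ n →
      (∀ t : ℝ, HasDerivAt (fun t => Real.exp (-((n : ℝ) - 1) * p * t) * S t)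
        (-((n : ℝ) * p + q) * (Real.exp (-((n : ℝ) - 1) * p * t) * S t)
          + q * (Real.exp (-(((n : ℝ) + 1) - 1) * p * t) * S t)) t) ∧
      Real.exp (-((n : ℝ) - 1) * p * 0) * S 0 = 1 :=
  fun n _ => ⟨hasDerivAt_exp_shift_mul_of_ode hS n, by simp [hS0]⟩

theorem circle_ansatz_closes_infinite_system (p q : ℝ) (hp : 0 < p) (hq : 0 ≤ q)
    (S : ℝ → ℝ) (hS0 : S 0 = 1)
    (hS : ∀ t : ℝ, HasDerivAt S (-(p + q) * S t + q * Real.exp (-p * t) * S t) t) :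
    ∀ n : ℕ, 1 ≤ n →
      (∀ t : ℝ, HasDerivAt (fun t => Real.exp (-((n : ℝ) - 1) * p * t) * S t)
        (-((n : ℝ) * p + q) * (Real.exp (-((n : ℝ) - 1) * p * t) * S t)
          + q * (Real.exp (-(((n : ℝ) + 1) - 1) * p * t) * S t)) t) ∧
      Real.exp (-((n : ℝ) - 1) * p * 0) * S 0 = 1 :=
  circle_ansatz_closes_infinite_system_general p q S hS0 hS
end

section
/- If f : [0,∞) → ℝ is differentiable, f(0) = 0, and f'(t) < (1-f(t))(p + q f(t)) for all t > 0 with p,q > 0, then f(t) < f_Bass(t) for all t > 0, where f_Bass is the solution of f'(t) = (1-f)(p+qf), f(0)=0. -/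
/-!
The time shifts `t ↦ f_Bass (t + ε)` of the Bass curve solve the same autonomous ODE and start
strictly above `f 0 = 0`, so the strict fencing theorem `image_le_of_deriv_right_lt_deriv_boundary`
gives `f ≤ f_Bass (· + ε)`; letting `ε → 0` yields `f ≤ f_Bass`. Equality at some `t > 0` would make
`f_Bass - f` have a local minimum there, forcing `f' t = (1 - f t) (p + q f t)`.
-/

open Real Set Filter Topology

theorem HasDerivAt.eq_of_eventually_le_of_eq {f g : ℝ → ℝ} {a b t : ℝ} (hf : HasDerivAt f a t)
    (hg : HasDerivAt g b t) (hle : ∀ᶠ s in 𝓝 t, f s ≤ g s) (heq : f t = g t) : a = b := by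
  have hmin : IsLocalMin (fun s => g s - f s) t :=
    hle.mono fun s hs => by simpa [heq] using hs
  linarith [hmin.hasDerivAt_eq_zero (hg.sub hf)]

section AutonomousComparison

variable {F f f' g : ℝ → ℝ}

theorem le_of_hasDerivAt_lt_of_autonomous (hg : ∀ t, HasDerivAt g (F (g t)) t)
    (hf : ∀ t ≥ 0, HasDerivAt f (f' t) t) (hlt : ∀ t > 0, f' t < F (f t))
    (h0 : ∀ ε > 0, f 0 < g ε) {t : ℝ} (ht : 0 ≤ t) : f t ≤ g t := by
  have shifted : ∀ ε > 0, f t ≤ g (t + ε) := by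
    intro ε hε
    refine image_le_of_deriv_right_lt_deriv_boundary (B := fun s => g (s + ε))
      (fun s hs => (hf s hs.1).continuousAt.continuousWithinAt)
      (fun s hs => (hf s hs.1).hasDerivWithinAt) (by simpa using (h0 ε hε).le)
      (fun s => (hg (s + ε)).comp_add_const s ε) ?_ ⟨ht, le_rfl⟩
    rintro s ⟨hs, -⟩ hfs
    rcases hs.eq_or_lt with rfl | hs
    · exact absurd hfs (by simpa using (h0 ε hε).ne)
    · simpa [hfs] using hlt s hs
  have hlim : Tendsto (fun ε => g (t + ε)) (𝓝[>] 0) (𝓝 (g t)) := by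
    have hshift : Tendsto (fun ε => t + ε) (𝓝[>] 0) (𝓝 t) :=
      ((continuous_const_add t).tendsto' 0 t (add_zero t)).mono_left nhdsWithin_le_nhds
    exact (hg t).continuousAt.tendsto.comp hshift
  exact ge_of_tendsto hlim (eventually_nhdsWithin_of_forall shifted)

theorem lt_of_hasDerivAt_lt_of_autonomous (hg : ∀ t, HasDerivAt g (F (g t)) t)
    (hf : ∀ t ≥ 0, HasDerivAt f (f' t) t) (hlt : ∀ t > 0, f' t < F (f t))
    (h0 : ∀ ε > 0, f 0 < g ε) {t : ℝ} (ht : 0 < t) : f t < g t := by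
  have hle : ∀ᶠ s in 𝓝 t, f s ≤ g s := (eventually_gt_nhds ht).mono fun s hs =>
    le_of_hasDerivAt_lt_of_autonomous hg hf hlt h0 hs.le
  refine hle.self_of_nhds.lt_of_ne fun heq => (hlt t ht).ne ?_
  rw [heq]
  exact (hf t ht.le).eq_of_eventually_le_of_eq (hg t) hle heq

end AutonomousComparison

noncomputable def bass (p q t : ℝ) : ℝ :=
  (1 - exp (-(p + q) * t)) / (1 + (q / p) * exp (-(p + q) * t))

theorem hasDerivAt_bass {p q : ℝ} (hp : 0 < p) (hq : 0 < q) (t : ℝ) :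
    HasDerivAt (bass p q) ((1 - bass p q t) * (p + q * bass p q t)) t := by
  have hE : HasDerivAt (fun s => exp (-(p + q) * s)) (exp (-(p + q) * t) * (-(p + q))) t := by
    simpa using ((hasDerivAt_id t).const_mul (-(p + q))).exp
  have hden : 1 + (q / p) * exp (-(p + q) * t) ≠ 0 := by positivity
  refine ((hE.const_sub 1).div ((hE.const_mul (q / p)).const_add 1) hden).congr_deriv ?_
  rw [bass]
  field_simp
  ring

theorem bass_pos {p q t : ℝ} (hp : 0 < p) (hq : 0 < q) (ht : 0 < t) : 0 < bass p q t := by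
  have hE : exp (-(p + q) * t) < 1 := exp_lt_one_iff.2 (by nlinarith)
  exact div_pos (by linarith) (by positivity)

theorem bass_inequality_lemma (p q : ℝ) (hp : 0 < p) (hq : 0 < q)
    (f : ℝ → ℝ) (hf0 : f 0 = 0) (d : ℝ → ℝ)
    (hf : ∀ t ≥ (0:ℝ), HasDerivAt f (d t) t)
    (hineq : ∀ t > (0:ℝ), d t < (1 - f t) * (p + q * f t)) :
    ∀ t > (0:ℝ),
      f t < (1 - Real.exp (-(p + q) * t)) / (1 + (q / p) * Real.exp (-(p + q) * t)) :=
  fun _ ht => lt_of_hasDerivAt_lt_of_autonomous (F := fun x => (1 - x) * (p + q * x))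
    (hasDerivAt_bass hp hq) hf hineq (fun _ hε => hf0.symm ▸ bass_pos hp hq hε) ht
end

section
/- Consider the 2-group heterogeneous Bass system f₁'(t) = (1/2 - f₁)·2q(f₁+f₂), f₂'(t) = (1/2 - f₂)·2p, with f₁(0)=f₂(0)=0 and p ≥ q > 0. Then f₂(t) > f₁(t) for all t > 0. -/
open Real Set

/-!
`1/2 - f₂` solves `u' = -2p u` with `u 0 = 1/2`, so it is `exp (-2pt) / 2` and `f₂ < 1/2`.
Where the two curves meet at a common value `v < 1/2`, their rates are `(1/2 - v)·4qv` and
`(1/2 - v)·2p`, and `4qv < 2q ≤ 2p`, so `f₂` is strictly faster at every contact. A barrier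
argument gives `f₁ ≤ f₂`; a contact at a positive time would then be an interior minimum of
`f₂ - f₁` at which its derivative is positive.
-/

theorem eq_mul_exp_of_hasDerivAt_const_mul {u : ℝ → ℝ} {k a : ℝ}
    (hu : ∀ t ≥ a, HasDerivAt u (k * u t) t) {t : ℝ} (ht : a ≤ t) :
    u t = u a * exp (k * (t - a)) := by
  have hderiv : ∀ s ≥ a, HasDerivAt (fun s => u s * exp (-k * (s - a))) 0 s := by
    intro s hs
    have hlin : HasDerivAt (fun s => -k * (s - a)) (-k) s := by
      simpa using ((hasDerivAt_id' s).sub_const a).const_mul (-k)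
    exact ((hu s hs).mul hlin.exp).congr_deriv (by ring)
  have hconst := constant_of_has_deriv_right_zero
    (fun s hs => (hderiv s hs.1).continuousAt.continuousWithinAt)
    (fun s hs => (hderiv s hs.1).hasDerivWithinAt) t ⟨ht, le_rfl⟩
  simp only [sub_self, mul_zero, exp_zero, mul_one] at hconst
  rw [← hconst, mul_assoc, ← exp_add]
  simp

theorem image_lt_of_deriv_lt_deriv_boundary {f g f' g' : ℝ → ℝ} {a : ℝ}
    (hf : ∀ t ≥ a, HasDerivAt f (f' t) t) (hg : ∀ t ≥ a, HasDerivAt g (g' t) t)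
    (ha : f a ≤ g a) (hcontact : ∀ t ≥ a, f t = g t → f' t < g' t) :
    ∀ t > a, f t < g t := by
  have hle : ∀ t ≥ a, f t ≤ g t := fun t ht =>
    image_le_of_deriv_right_lt_deriv_boundary'
      (fun s hs => (hf s hs.1).continuousAt.continuousWithinAt)
      (fun s hs => (hf s hs.1).hasDerivWithinAt) ha
      (fun s hs => (hg s hs.1).continuousAt.continuousWithinAt)
      (fun s hs => (hg s hs.1).hasDerivWithinAt) (fun s hs => hcontact s hs.1) ⟨ht, le_rfl⟩
  intro t ht
  refine (hle t ht.le).lt_of_ne fun heq => ?_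
  have hmin : IsLocalMin (g - f) t := by
    filter_upwards [Ioi_mem_nhds ht] with s hs
    simpa [heq] using hle s hs.le
  have hzero := hmin.hasDerivAt_eq_zero ((hg t ht.le).sub (hf t ht.le))
  linarith [hcontact t ht.le heq]

theorem bass_rate_lt_of_lt_half {p q v : ℝ} (hq : 0 < q) (hpq : q ≤ p) (hv : v < 1 / 2) :
    (1 / 2 - v) * (2 * q * (v + v)) < (1 / 2 - v) * (2 * p) := by
  have hrate : 2 * q * (v + v) < 2 * p := by nlinarith
  exact mul_lt_mul_of_pos_left hrate (by linarith)

theorem two_group_f2_gt_f1 (p q : ℝ) (hq : 0 < q) (hpq : q ≤ p)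
    (f₁ f₂ : ℝ → ℝ) (h₁0 : f₁ 0 = 0) (h₂0 : f₂ 0 = 0)
    (hf₁ : ∀ t ≥ (0:ℝ), HasDerivAt f₁ ((1 / 2 - f₁ t) * (2 * q * (f₁ t + f₂ t))) t)
    (hf₂ : ∀ t ≥ (0:ℝ), HasDerivAt f₂ ((1 / 2 - f₂ t) * (2 * p)) t) :
    ∀ t > (0:ℝ), f₁ t < f₂ t := by
  have hf₂_lt : ∀ t ≥ (0:ℝ), f₂ t < 1 / 2 := by
    intro t ht
    have hsol := eq_mul_exp_of_hasDerivAt_const_mul (u := fun s => 1 / 2 - f₂ s) (k := -(2 * p))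
      (fun s hs => ((hf₂ s hs).const_sub _).congr_deriv (by ring)) ht
    have hpos : 0 < 1 / 2 - f₂ t := by rw [hsol, h₂0]; positivity
    linarith
  refine image_lt_of_deriv_lt_deriv_boundary hf₁ hf₂ (h₁0.trans h₂0.symm).le fun t ht heq => ?_
  rw [heq]
  exact bass_rate_lt_of_lt_half hq hpq (hf₂_lt t ht)
end

section
/- Consider the 2-group heterogeneous Bass system f₁'(t) = (1/2 - f₁)·2q(f₁+f₂), f₂'(t) = (1/2 - f₂)·2p, with f₁(0)=f₂(0)=0 and p ≥ q > 0. Then the total adoption f^het := f₁ + f₂ satisfies f^het(t) < f^hom(t) for all t > 0, where f^hom is the solution of (f^hom)' = (1-f^hom)(p + q f^hom) with f^hom(0)=0. -/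
open Real Set

/-!
Write `F = f₁ + f₂` and `G` for the homogeneous solution. Both `1/2 - fᵢ` solve linear equations
`φ' = -b φ` with `φ 0 = 1/2`, so `fᵢ < 1/2`, hence `q F < p`. Then `f₂ - f₁` and `G - F` solve
`φ' = -b φ + c` with `φ 0 = 0` and forcing terms `c = (1 - 2 f₂)(p - q F)` and
`c = (f₂ - f₁)(p - q F)` respectively; both are positive for `t > 0` (the second one once
`f₁ < f₂` is known), so the integrating factor `exp (∫₀ᵗ b)` shows `f₁ < f₂` and then `F < G`.
-/

section LinearODE

variable {φ b c : ℝ → ℝ}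

/-- Extending `b` by `b 0` to the left of `0` makes the integrand continuous on all of `ℝ`, so the
fundamental theorem of calculus applies at every `x ≥ 0`, including `x = 0`. -/
noncomputable def integratingFactor (b : ℝ → ℝ) (x : ℝ) : ℝ :=
  exp (∫ s in (0 : ℝ)..x, b (max s 0))

lemma integratingFactor_pos (b : ℝ → ℝ) (x : ℝ) : 0 < integratingFactor b x :=
  exp_pos _

@[simp]
lemma integratingFactor_zero (b : ℝ → ℝ) : integratingFactor b 0 = 1 := by
  simp [integratingFactor]

lemma hasDerivAt_integratingFactor (hb : ContinuousOn b (Ici 0)) {x : ℝ} (hx : 0 ≤ x) :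
    HasDerivAt (integratingFactor b) (integratingFactor b x * b x) x := by
  have hcont : Continuous fun s => b (max s 0) :=
    hb.comp_continuous (continuous_id.max continuous_const) fun s => le_max_right s 0
  have h := (hcont.integral_hasStrictDerivAt 0 x).hasDerivAt.exp
  rwa [max_eq_left hx] at h

lemma hasDerivAt_mul_integratingFactor (hb : ContinuousOn b (Ici 0)) {x : ℝ} (hx : 0 ≤ x)
    (hφ : HasDerivAt φ (-b x * φ x + c x) x) :
    HasDerivAt (fun y => φ y * integratingFactor b y) (c x * integratingFactor b x) x :=
  (hφ.mul (hasDerivAt_integratingFactor hb hx)).congr_deriv (by ring)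

lemma monotoneOn_mul_integratingFactor (hb : ContinuousOn b (Ici 0))
    (hφ : ∀ x ≥ 0, HasDerivAt φ (-b x * φ x + c x) x) (hc : ∀ x > 0, 0 ≤ c x) :
    MonotoneOn (fun y => φ y * integratingFactor b y) (Ici 0) := by
  have hψ x (hx : 0 ≤ x) := hasDerivAt_mul_integratingFactor hb hx (hφ x hx)
  refine monotoneOn_of_deriv_nonneg (convex_Ici 0)
    (fun x hx => (hψ x hx).continuousAt.continuousWithinAt) ?_ ?_ <;>
  rw [interior_Ici] <;> intro x (hx : 0 < x)
  · exact (hψ x hx.le).differentiableAt.differentiableWithinAt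
  · rw [(hψ x hx.le).deriv]
    exact mul_nonneg (hc x hx) (integratingFactor_pos b x).le

lemma strictMonoOn_mul_integratingFactor (hb : ContinuousOn b (Ici 0))
    (hφ : ∀ x ≥ 0, HasDerivAt φ (-b x * φ x + c x) x) (hc : ∀ x > 0, 0 < c x) :
    StrictMonoOn (fun y => φ y * integratingFactor b y) (Ici 0) := by
  have hψ x (hx : 0 ≤ x) := hasDerivAt_mul_integratingFactor hb hx (hφ x hx)
  refine strictMonoOn_of_deriv_pos (convex_Ici 0)
    (fun x hx => (hψ x hx).continuousAt.continuousWithinAt) ?_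
  rw [interior_Ici]
  intro x (hx : 0 < x)
  rw [(hψ x hx.le).deriv]
  exact mul_pos (hc x hx) (integratingFactor_pos b x)

lemma pos_of_hasDerivAt_linear_of_pos (hb : ContinuousOn b (Ici 0))
    (hφ : ∀ x ≥ 0, HasDerivAt φ (-b x * φ x + c x) x) (hc : ∀ x > 0, 0 ≤ c x)
    (h0 : 0 < φ 0) {t : ℝ} (ht : 0 ≤ t) : 0 < φ t := by
  have h := monotoneOn_mul_integratingFactor hb hφ hc self_mem_Ici ht ht
  simp only [integratingFactor_zero, mul_one] at h
  exact pos_of_mul_pos_left (h0.trans_le h) (integratingFactor_pos b t).le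

lemma pos_of_hasDerivAt_linear_of_eq_zero (hb : ContinuousOn b (Ici 0))
    (hφ : ∀ x ≥ 0, HasDerivAt φ (-b x * φ x + c x) x) (hc : ∀ x > 0, 0 < c x)
    (h0 : φ 0 = 0) {t : ℝ} (ht : 0 < t) : 0 < φ t := by
  have h := strictMonoOn_mul_integratingFactor hb hφ hc self_mem_Ici ht.le ht
  simp only [h0, zero_mul] at h
  exact pos_of_mul_pos_left h (integratingFactor_pos b t).le

end LinearODE

noncomputable def bassAdoption (p q t : ℝ) : ℝ :=
  (1 - exp (-(p + q) * t)) / (1 + (q / p) * exp (-(p + q) * t))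

@[simp]
lemma bassAdoption_zero (p q : ℝ) : bassAdoption p q 0 = 0 := by
  simp [bassAdoption]

lemma hasDerivAt_bassAdoption {p q : ℝ} (hp : 0 < p) (hq : 0 ≤ q) (t : ℝ) :
    HasDerivAt (bassAdoption p q)
      ((1 - bassAdoption p q t) * (p + q * bassAdoption p q t)) t := by
  have hden : 0 < 1 + q / p * exp (-(p + q) * t) := by positivity
  have hE : HasDerivAt (fun s => exp (-(p + q) * s)) (exp (-(p + q) * t) * -(p + q)) t := by
    simpa using ((hasDerivAt_id t).const_mul (-(p + q))).exp
  refine ((hE.const_sub 1).div ((hE.const_mul (q / p)).const_add 1) hden.ne').congr_deriv ?_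
  unfold bassAdoption
  field_simp
  ring

lemma continuous_bassAdoption {p q : ℝ} (hp : 0 < p) (hq : 0 ≤ q) :
    Continuous (bassAdoption p q) :=
  continuous_iff_continuousAt.mpr fun t => (hasDerivAt_bassAdoption hp hq t).continuousAt

lemma mul_add_lt_of_lt_half {p q a b : ℝ} (hq : 0 < q) (hpq : q ≤ p) (ha : a < 1 / 2)
    (hb : b < 1 / 2) : q * (a + b) < p := by
  nlinarith

namespace TwoGroupBass

variable {p q : ℝ} {f₁ f₂ : ℝ → ℝ}

lemma snd_lt_half (h₂0 : f₂ 0 = 0)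
    (hf₂ : ∀ t ≥ (0 : ℝ), HasDerivAt f₂ ((1 / 2 - f₂ t) * (2 * p)) t) {t : ℝ} (ht : 0 ≤ t) :
    f₂ t < 1 / 2 :=
  sub_pos.mp <| pos_of_hasDerivAt_linear_of_pos (b := fun _ => 2 * p) (c := fun _ => 0)
    continuousOn_const (fun x hx => ((hf₂ x hx).const_sub _).congr_deriv (by ring))
    (fun _ _ => le_rfl) (by simp [h₂0]) ht

lemma fst_lt_half (h₁0 : f₁ 0 = 0) (hF : ContinuousOn (f₁ + f₂) (Ici 0))
    (hf₁ : ∀ t ≥ (0 : ℝ), HasDerivAt f₁ ((1 / 2 - f₁ t) * (2 * q * (f₁ t + f₂ t))) t)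
    {t : ℝ} (ht : 0 ≤ t) : f₁ t < 1 / 2 :=
  sub_pos.mp <| pos_of_hasDerivAt_linear_of_pos (b := fun x => 2 * q * (f₁ x + f₂ x))
    (c := fun _ => 0) (continuousOn_const.mul hF)
    (fun x hx => ((hf₁ x hx).const_sub _).congr_deriv (by ring))
    (fun _ _ => le_rfl) (by simp [h₁0]) ht

lemma fst_lt_snd (hF : ContinuousOn (f₁ + f₂) (Ici 0)) (h₁0 : f₁ 0 = 0) (h₂0 : f₂ 0 = 0)
    (hslack : ∀ t ≥ (0 : ℝ), q * (f₁ t + f₂ t) < p) (hf₂half : ∀ t ≥ (0 : ℝ), f₂ t < 1 / 2)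
    (hf₁ : ∀ t ≥ (0 : ℝ), HasDerivAt f₁ ((1 / 2 - f₁ t) * (2 * q * (f₁ t + f₂ t))) t)
    (hf₂ : ∀ t ≥ (0 : ℝ), HasDerivAt f₂ ((1 / 2 - f₂ t) * (2 * p)) t) {t : ℝ} (ht : 0 < t) :
    f₁ t < f₂ t :=
  sub_pos.mp <| pos_of_hasDerivAt_linear_of_eq_zero (φ := fun x => f₂ x - f₁ x)
    (b := fun x => 2 * q * (f₁ x + f₂ x))
    (c := fun x => (1 - 2 * f₂ x) * (p - q * (f₁ x + f₂ x))) (continuousOn_const.mul hF)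
    (fun x hx => ((hf₂ x hx).sub (hf₁ x hx)).congr_deriv (by ring))
    (fun x hx => mul_pos (by linarith [hf₂half x hx.le]) (sub_pos.mpr (hslack x hx.le)))
    (by simp [h₁0, h₂0]) ht

lemma total_lt_bassAdoption (hp : 0 < p) (hq : 0 ≤ q) (hF : ContinuousOn (f₁ + f₂) (Ici 0))
    (h₁0 : f₁ 0 = 0) (h₂0 : f₂ 0 = 0) (hslack : ∀ t ≥ (0 : ℝ), q * (f₁ t + f₂ t) < p)
    (hgap : ∀ t > (0 : ℝ), f₁ t < f₂ t)
    (hf₁ : ∀ t ≥ (0 : ℝ), HasDerivAt f₁ ((1 / 2 - f₁ t) * (2 * q * (f₁ t + f₂ t))) t)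
    (hf₂ : ∀ t ≥ (0 : ℝ), HasDerivAt f₂ ((1 / 2 - f₂ t) * (2 * p)) t) {t : ℝ} (ht : 0 < t) :
    f₁ t + f₂ t < bassAdoption p q t :=
  sub_pos.mp <| pos_of_hasDerivAt_linear_of_eq_zero
    (φ := fun x => bassAdoption p q x - (f₁ x + f₂ x))
    (b := fun x => p - q + q * (bassAdoption p q x + (f₁ x + f₂ x)))
    (c := fun x => (f₂ x - f₁ x) * (p - q * (f₁ x + f₂ x)))
    (continuousOn_const.add <| continuousOn_const.mul <|
      (continuous_bassAdoption hp hq).continuousOn.add hF)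
    (fun x hx => ((hasDerivAt_bassAdoption hp hq x).sub ((hf₁ x hx).add (hf₂ x hx))).congr_deriv
      (by ring))
    (fun x hx => mul_pos (sub_pos.mpr (hgap x hx)) (sub_pos.mpr (hslack x hx.le)))
    (by simp [h₁0, h₂0]) ht

end TwoGroupBass

theorem two_group_het_slower (p q : ℝ) (hq : 0 < q) (hpq : q ≤ p)
    (f₁ f₂ : ℝ → ℝ) (h₁0 : f₁ 0 = 0) (h₂0 : f₂ 0 = 0)
    (hf₁ : ∀ t ≥ (0:ℝ), HasDerivAt f₁ ((1 / 2 - f₁ t) * (2 * q * (f₁ t + f₂ t))) t)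
    (hf₂ : ∀ t ≥ (0:ℝ), HasDerivAt f₂ ((1 / 2 - f₂ t) * (2 * p)) t) :
    ∀ t > (0:ℝ),
      f₁ t + f₂ t <
        (1 - Real.exp (-(p + q) * t)) / (1 + (q / p) * Real.exp (-(p + q) * t)) := by
  have hp : 0 < p := hq.trans_le hpq
  have hF : ContinuousOn (f₁ + f₂) (Ici 0) := fun t ht =>
    ((hf₁ t ht).continuousAt.add (hf₂ t ht).continuousAt).continuousWithinAt
  have hf₂half t (ht : t ≥ 0) := TwoGroupBass.snd_lt_half h₂0 hf₂ ht
  have hslack t (ht : t ≥ 0) : q * (f₁ t + f₂ t) < p :=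
    mul_add_lt_of_lt_half hq hpq (TwoGroupBass.fst_lt_half h₁0 hF hf₁ ht) (hf₂half t ht)
  have hgap t (ht : t > 0) := TwoGroupBass.fst_lt_snd hF h₁0 h₂0 hslack hf₂half hf₁ hf₂ ht
  exact fun t ht => TwoGroupBass.total_lt_bassAdoption hp hq.le hF h₁0 h₂0 hslack hgap hf₁ hf₂ ht
end

section
/- Consider the system f₁'(t) = (1/2 - f₁)·4q·f₂, f₂'(t) = (1/2 - f₂)·2p with f₁(0)=f₂(0)=0, and let f^het = f₁+f₂; let f^hom solve (f^hom)' = (1-f^hom)(p+q f^hom), f^hom(0)=0. Then (f^het)'(0) = (f^hom)'(0) = p, (f^het)''(0) = 2p(q-p), and (f^hom)''(0) = p(q-p). Consequently if q > p > 0 then f^het(t) > f^hom(t) for all sufficiently small t > 0. -/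
/-!
Both right-hand sides equal `p` at `t = 0`, so the difference `D = f^het - f^hom` satisfies
`D(0) = D'(0) = 0` and `D''(0) = 2p(q-p) - p(q-p) = p(q-p) > 0`. Hence `D'` is positive on some
interval `(0, δ)`, so `D` is strictly increasing on `[0, δ]` and positive on `(0, δ)`.
-/

open Set Topology Filter

section RightDerivatives

variable {f F : ℝ → ℝ} {a c : ℝ}

theorem derivWithin_Ici_eqOn (hf : ∀ t ∈ Ici a, HasDerivWithinAt f (F t) (Ici a) t) :
    EqOn (derivWithin f (Ici a)) F (Ici a) :=
  fun t ht => (hf t ht).derivWithin (uniqueDiffOn_Ici a t ht)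

theorem derivWithin_derivWithin_Ici_eq (hf : ∀ t ∈ Ici a, HasDerivWithinAt f (F t) (Ici a) t)
    (hF : HasDerivWithinAt F c (Ici a) a) :
    derivWithin (derivWithin f (Ici a)) (Ici a) a = c := by
  rw [derivWithin_congr (derivWithin_Ici_eqOn hf) (derivWithin_Ici_eqOn hf self_mem_Ici)]
  exact hF.derivWithin (uniqueDiffOn_Ici a a self_mem_Ici)

theorem eventually_pos_of_hasDerivWithinAt_Ici (hf0 : f a = 0)
    (hf : HasDerivWithinAt f c (Ici a) a) (hc : 0 < c) : ∀ᶠ t in 𝓝[>] a, 0 < f t := by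
  have hslope := (hasDerivWithinAt_iff_tendsto_slope' (lt_irrefl a)).1 hf.Ioi_of_Ici
  filter_upwards [hslope.eventually (eventually_gt_nhds hc), self_mem_nhdsWithin] with t ht hat
  rw [slope_def_field, hf0, sub_zero] at ht
  exact (div_pos_iff_of_pos_right (sub_pos.2 hat)).1 ht

theorem eventually_pos_of_hasDerivWithinAt_Ici_of_deriv_eq_zero (hf0 : f a = 0) (hF0 : F a = 0)
    (hf : ∀ t ∈ Ici a, HasDerivWithinAt f (F t) (Ici a) t)
    (hF : HasDerivWithinAt F c (Ici a) a) (hc : 0 < c) : ∀ᶠ t in 𝓝[>] a, 0 < f t := by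
  obtain ⟨b, hab, hFpos⟩ :=
    mem_nhdsGT_iff_exists_Ioo_subset.1 (eventually_pos_of_hasDerivWithinAt_Ici hF0 hF hc)
  have hmono : StrictMonoOn f (Icc a b) := by
    refine strictMonoOn_of_hasDerivWithinAt_pos (f' := F) (convex_Icc a b)
      (fun t ht => (hf t ht.1).continuousWithinAt.mono Icc_subset_Ici_self) ?_ ?_
    · rw [interior_Icc]
      exact fun t ht => (hf t ht.1.le).mono (Ioo_subset_Icc_self.trans Icc_subset_Ici_self)
    · rw [interior_Icc]
      exact hFpos
  filter_upwards [Ioo_mem_nhdsGT hab] with t ht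
  simpa [hf0] using hmono (left_mem_Icc.2 hab.le) (Ioo_subset_Icc_self ht) ht.1

end RightDerivatives

section BassRates

variable {p q : ℝ} {f f₁ f₂ : ℝ → ℝ} {s : Set ℝ} {x : ℝ}

theorem hasDerivWithinAt_hetRate (hf₁ : HasDerivWithinAt f₁ ((1 / 2 - f₁ x) * (4 * q * f₂ x)) s x)
    (hf₂ : HasDerivWithinAt f₂ ((1 / 2 - f₂ x) * (2 * p)) s x) (h₁ : f₁ x = 0) (h₂ : f₂ x = 0) :
    HasDerivWithinAt (fun t => (1 / 2 - f₁ t) * (4 * q * f₂ t) + (1 / 2 - f₂ t) * (2 * p))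
      (2 * p * (q - p)) s x := by
  refine ((hf₁.const_sub _).mul (hf₂.const_mul _) |>.add ((hf₂.const_sub _).mul_const _))
    |>.congr_deriv ?_
  rw [h₁, h₂]
  ring

theorem hasDerivWithinAt_homRate (hf : HasDerivWithinAt f ((1 - f x) * (p + q * f x)) s x)
    (h : f x = 0) :
    HasDerivWithinAt (fun t => (1 - f t) * (p + q * f t)) (p * (q - p)) s x := by
  refine ((hf.const_sub _).mul ((hf.const_mul q).const_add p)).congr_deriv ?_
  rw [h]
  ring

end BassRates

theorem het_initially_faster_general (p q : ℝ) (hp : 0 < p)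
    (f₁ f₂ fhom : ℝ → ℝ)
    (h₁0 : f₁ 0 = 0) (h₂0 : f₂ 0 = 0) (hhom0 : fhom 0 = 0)
    (hf₁ : ∀ t ∈ Ici (0:ℝ),
      HasDerivWithinAt f₁ ((1 / 2 - f₁ t) * (4 * q * f₂ t)) (Ici 0) t)
    (hf₂ : ∀ t ∈ Ici (0:ℝ),
      HasDerivWithinAt f₂ ((1 / 2 - f₂ t) * (2 * p)) (Ici 0) t)
    (hfhom : ∀ t ∈ Ici (0:ℝ),
      HasDerivWithinAt fhom ((1 - fhom t) * (p + q * fhom t)) (Ici 0) t) :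
    derivWithin (fun t => f₁ t + f₂ t) (Ici 0) 0 = p ∧
    derivWithin fhom (Ici 0) 0 = p ∧
    derivWithin (derivWithin (fun t => f₁ t + f₂ t) (Ici 0)) (Ici 0) 0 = 2 * p * (q - p) ∧
    derivWithin (derivWithin fhom (Ici 0)) (Ici 0) 0 = p * (q - p) ∧
    (p < q → ∃ δ > (0:ℝ), ∀ t ∈ Ioo (0:ℝ) δ, fhom t < f₁ t + f₂ t) := by
  have hhet : ∀ t ∈ Ici (0:ℝ), HasDerivWithinAt (fun t => f₁ t + f₂ t)
      ((1 / 2 - f₁ t) * (4 * q * f₂ t) + (1 / 2 - f₂ t) * (2 * p)) (Ici 0) t :=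
    fun t ht => (hf₁ t ht).add (hf₂ t ht)
  have hFhet := hasDerivWithinAt_hetRate (hf₁ 0 self_mem_Ici) (hf₂ 0 self_mem_Ici) h₁0 h₂0
  have hFhom := hasDerivWithinAt_homRate (hfhom 0 self_mem_Ici) hhom0
  refine ⟨?_, ?_, derivWithin_derivWithin_Ici_eq hhet hFhet,
    derivWithin_derivWithin_Ici_eq hfhom hFhom, fun hpq => ?_⟩
  · simp only [derivWithin_Ici_eqOn hhet self_mem_Ici, h₁0, h₂0]
    ring
  · simp only [derivWithin_Ici_eqOn hfhom self_mem_Ici, hhom0]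
    ring
  · have hgap : ∀ᶠ t in 𝓝[>] (0:ℝ), 0 < f₁ t + f₂ t - fhom t :=
      eventually_pos_of_hasDerivWithinAt_Ici_of_deriv_eq_zero (by simp [h₁0, h₂0, hhom0])
        (by simp [h₁0, h₂0, hhom0]) (fun t ht => (hhet t ht).sub (hfhom t ht))
        ((hFhet.sub hFhom).congr_deriv (by ring)) (mul_pos hp (sub_pos.2 hpq))
    obtain ⟨δ, hδ, hgapδ⟩ := mem_nhdsGT_iff_exists_Ioo_subset.1 hgap
    exact ⟨δ, hδ, fun t ht => sub_pos.1 (hgapδ ht)⟩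

theorem het_initially_faster (p q : ℝ) (hp : 0 < p) (hq : 0 < q)
    (f₁ f₂ fhom : ℝ → ℝ)
    (h₁0 : f₁ 0 = 0) (h₂0 : f₂ 0 = 0) (hhom0 : fhom 0 = 0)
    (hf₁ : ∀ t ∈ Ici (0:ℝ),
      HasDerivWithinAt f₁ ((1 / 2 - f₁ t) * (4 * q * f₂ t)) (Ici 0) t)
    (hf₂ : ∀ t ∈ Ici (0:ℝ),
      HasDerivWithinAt f₂ ((1 / 2 - f₂ t) * (2 * p)) (Ici 0) t)
    (hfhom : ∀ t ∈ Ici (0:ℝ),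
      HasDerivWithinAt fhom ((1 - fhom t) * (p + q * fhom t)) (Ici 0) t) :
    derivWithin (fun t => f₁ t + f₂ t) (Ici 0) 0 = p ∧
    derivWithin fhom (Ici 0) 0 = p ∧
    derivWithin (derivWithin (fun t => f₁ t + f₂ t) (Ici 0)) (Ici 0) 0 = 2 * p * (q - p) ∧
    derivWithin (derivWithin fhom (Ici 0)) (Ici 0) 0 = p * (q - p) ∧
    (p < q → ∃ δ > (0:ℝ), ∀ t ∈ Ioo (0:ℝ) δ, fhom t < f₁ t + f₂ t) :=
  het_initially_faster_general p q hp f₁ f₂ fhom h₁0 h₂0 hhom0 hf₁ hf₂ hfhom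
end

section
/- Let K ≥ 1, a_k > 0 with Σa_k = 1, p_k > 0, q_k ≥ 0, and let (f_k) solve the mildly heterogeneous Bass system f_k'(t) = (a_k - f_k)(p_k + q_k F) with F := Σ_{m} f_m and f_k(0)=0. Suppose p₁ ≤ p₂ ≤ ... ≤ p_K and q₁ ≤ q₂ ≤ ... ≤ q_K. Then for i > j with (p_i, q_i) ≠ (p_j, q_j), the normalized adoption fractions satisfy f_j(t)/a_j < f_i(t)/a_i for all t > 0. -/
/-!
Put `J(t) = ∫₀ᵗ F` (`cumulativeAdoption`). The integrating factor `exp (p_k t + q_k J(t))`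
solves the `k`-th equation: `f_k(t) / a_k = 1 - exp (-(p_k t + q_k J(t)))`, so it suffices to
compare the exponents, which needs `J(t) > 0`. Since every `f_k` stays below `a_k`, at a zero of
`F` its derivative is `Σ (a_m - f_m) p_m > 0`; hence `F ≥ 0`, so `J ≥ 0`, so each exponent is
positive for `t > 0`, which makes every `f_k(t)`, hence `F(t)` and `J(t)`, positive.
-/

open Real Finset Set

theorem eq_mul_exp_of_hasDerivWithinAt_neg_mul {u φ Φ : ℝ → ℝ} {a b : ℝ}
    (hu : ContinuousOn u (Icc a b)) (hΦ : ContinuousOn Φ (Icc a b))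
    (hu' : ∀ x ∈ Ico a b, HasDerivWithinAt u (-(φ x * u x)) (Ici x) x)
    (hΦ' : ∀ x ∈ Ico a b, HasDerivWithinAt Φ (φ x) (Ici x) x) :
    ∀ x ∈ Icc a b, u x = u a * exp (Φ a - Φ x) := by
  have hconst : ∀ x ∈ Icc a b, u x * exp (Φ x) = u a * exp (Φ a) :=
    constant_of_has_deriv_right_zero (hu.mul hΦ.rexp) fun x hx =>
      ((hu' x hx).fun_mul (hΦ' x hx).exp).congr_deriv (by ring)
  intro x hx
  rw [exp_sub, ← mul_div_assoc, ← hconst x hx, mul_div_cancel_right₀ _ (exp_pos _).ne']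

theorem hasDerivWithinAt_integral_Ici {F : ℝ → ℝ} {a x : ℝ} (hF : ContinuousOn F (Ici a))
    (hx : a ≤ x) : HasDerivWithinAt (fun t => ∫ s in a..t, F s) (F x) (Ici x) x := by
  have hsub : Ioi x ⊆ Ici a := Ioi_subset_Ici_self.trans (Ici_subset_Ici.2 hx)
  exact intervalIntegral.integral_hasDerivWithinAt_right
    ((hF.mono Icc_subset_Ici_self).intervalIntegrable_of_Icc hx)
    ((hF.stronglyMeasurableAtFilter_nhdsWithin measurableSet_Ici x).filter_mono
      (nhdsWithin_mono _ hsub))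
    ((hF x hx).mono hsub)

theorem continuousOn_integral_Icc {F : ℝ → ℝ} {a b : ℝ} (hF : ContinuousOn F (Ici a))
    (hab : a ≤ b) : ContinuousOn (fun t => ∫ s in a..t, F s) (Icc a b) := by
  rw [← uIcc_of_le hab]
  exact intervalIntegral.continuousOn_primitive_interval
    ((hF.mono (uIcc_of_le hab ▸ Icc_subset_Ici_self)).integrableOn_compact isCompact_uIcc)

theorem add_mul_lt_add_mul_of_le_of_ne {p p' q q' t s : ℝ} (ht : 0 < t) (hs : 0 < s)
    (hp : p ≤ p') (hq : q ≤ q') (hne : (p', q') ≠ (p, q)) :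
    p * t + q * s < p' * t + q' * s := by
  rcases hp.lt_or_eq with hp | rfl
  · nlinarith [mul_le_mul_of_nonneg_right hq hs.le]
  · have hq : q < q' := hq.lt_of_ne fun h => hne (by rw [h])
    nlinarith

section Bass

variable {ι : Type*} [Fintype ι] {a p q : ι → ℝ} {f : ι → ℝ → ℝ}

structure IsBassSolution (a p q : ι → ℝ) (f : ι → ℝ → ℝ) : Prop where
  apply_zero : ∀ k, f k 0 = 0
  hasDerivAt : ∀ k, ∀ t ≥ (0 : ℝ),
    HasDerivAt (f k) ((a k - f k t) * (p k + q k * ∑ m, f m t)) t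

noncomputable def cumulativeAdoption (f : ι → ℝ → ℝ) (t : ℝ) : ℝ :=
  ∫ s in (0 : ℝ)..t, ∑ m, f m s

namespace IsBassSolution

theorem continuousOn (hf : IsBassSolution a p q f) (k : ι) : ContinuousOn (f k) (Ici 0) :=
  fun t ht => (hf.hasDerivAt k t ht).continuousAt.continuousWithinAt

theorem continuousOn_sum (hf : IsBassSolution a p q f) :
    ContinuousOn (fun t => ∑ m, f m t) (Ici 0) :=
  continuousOn_finsetSum _ fun k _ => hf.continuousOn k

theorem hasDerivAt_sum (hf : IsBassSolution a p q f) {t : ℝ} (ht : 0 ≤ t) :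
    HasDerivAt (fun t => ∑ m, f m t)
      (∑ k, (a k - f k t) * (p k + q k * ∑ m, f m t)) t :=
  HasDerivAt.fun_sum fun k _ => hf.hasDerivAt k t ht

theorem sub_eq_mul_exp (hf : IsBassSolution a p q f) (k : ι) {t : ℝ} (ht : 0 ≤ t) :
    a k - f k t = a k * exp (-(p k * t + q k * cumulativeAdoption f t)) := by
  have hexponent : ∀ x ∈ Ico 0 t,
      HasDerivWithinAt (fun x => p k * x + q k * cumulativeAdoption f x)
        (p k + q k * ∑ m, f m x) (Ici x) x := fun x hx =>
    (((hasDerivWithinAt_id x _).const_mul (p k)).add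
      ((hasDerivWithinAt_integral_Ici hf.continuousOn_sum hx.1).const_mul (q k))).congr_deriv
      (by simp)
  have h := eq_mul_exp_of_hasDerivWithinAt_neg_mul (u := fun x => a k - f k x)
    (continuousOn_const.sub ((hf.continuousOn k).mono Icc_subset_Ici_self))
    ((continuousOn_const.mul continuousOn_id).add
      (continuousOn_const.mul (continuousOn_integral_Icc hf.continuousOn_sum ht)))
    (fun x hx => ((hf.hasDerivAt k x hx.1).const_sub (a k)).hasDerivWithinAt.congr_deriv
      (by ring))
    hexponent t (right_mem_Icc.2 ht)
  simpa [hf.apply_zero, cumulativeAdoption] using h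

theorem div_eq_one_sub_exp (hf : IsBassSolution a p q f) {k : ι} (hak : a k ≠ 0) {t : ℝ}
    (ht : 0 ≤ t) : f k t / a k = 1 - exp (-(p k * t + q k * cumulativeAdoption f t)) := by
  field_simp
  linarith [hf.sub_eq_mul_exp k ht]

theorem apply_lt (hf : IsBassSolution a p q f) {k : ι} (hak : 0 < a k) {t : ℝ} (ht : 0 ≤ t) :
    f k t < a k :=
  sub_pos.1 (hf.sub_eq_mul_exp k ht ▸ mul_pos hak (exp_pos _))

theorem sum_nonneg [Nonempty ι] (hf : IsBassSolution a p q f) (ha : ∀ k, 0 < a k)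
    (hp : ∀ k, 0 < p k) {t : ℝ} (ht : 0 ≤ t) : 0 ≤ ∑ m, f m t := by
  refine image_le_of_deriv_right_lt_deriv_boundary' continuousOn_const
    (fun x _ => hasDerivWithinAt_const x _ 0) (by simp [hf.apply_zero])
    (hf.continuousOn_sum.mono Icc_subset_Ici_self)
    (fun x hx => (hf.hasDerivAt_sum hx.1).hasDerivWithinAt) (fun x hx hx0 => ?_)
    (right_mem_Icc.2 ht)
  simp only [← hx0, mul_zero, add_zero]
  exact Finset.sum_pos (fun k _ => mul_pos (sub_pos.2 (hf.apply_lt (ha k) hx.1)) (hp k))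
    univ_nonempty

theorem cumulativeAdoption_nonneg [Nonempty ι] (hf : IsBassSolution a p q f)
    (ha : ∀ k, 0 < a k) (hp : ∀ k, 0 < p k) {t : ℝ} (ht : 0 ≤ t) :
    0 ≤ cumulativeAdoption f t :=
  intervalIntegral.integral_nonneg ht fun _ hs => hf.sum_nonneg ha hp hs.1

theorem apply_pos [Nonempty ι] (hf : IsBassSolution a p q f) (ha : ∀ k, 0 < a k)
    (hp : ∀ k, 0 < p k) (hq : ∀ k, 0 ≤ q k) (k : ι) {t : ℝ} (ht : 0 < t) : 0 < f k t := by
  have hexponent : 0 < p k * t + q k * cumulativeAdoption f t :=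
    add_pos_of_pos_of_nonneg (mul_pos (hp k) ht)
      (mul_nonneg (hq k) (hf.cumulativeAdoption_nonneg ha hp ht.le))
  rw [← div_pos_iff_of_pos_right (ha k), hf.div_eq_one_sub_exp (ha k).ne' ht.le, sub_pos,
    exp_lt_one_iff, neg_lt_zero]
  exact hexponent

theorem cumulativeAdoption_pos [Nonempty ι] (hf : IsBassSolution a p q f)
    (ha : ∀ k, 0 < a k) (hp : ∀ k, 0 < p k) (hq : ∀ k, 0 ≤ q k) {t : ℝ} (ht : 0 < t) :
    0 < cumulativeAdoption f t :=
  intervalIntegral.intervalIntegral_pos_of_pos_on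
    ((hf.continuousOn_sum.mono Icc_subset_Ici_self).intervalIntegrable_of_Icc ht.le)
    (fun _ hs => Finset.sum_pos (fun k _ => hf.apply_pos ha hp hq k hs.1) univ_nonempty) ht

end IsBassSolution

end Bass

theorem group_adoption_monotone_general (K : ℕ)
    (a p q : Fin K → ℝ)
    (ha : ∀ k, 0 < a k)
    (hp : ∀ k, 0 < p k) (hq : ∀ k, 0 ≤ q k)
    (hpmono : Monotone p) (hqmono : Monotone q)
    (f : Fin K → ℝ → ℝ) (hf0 : ∀ k, f k 0 = 0)
    (hode : ∀ k, ∀ t ≥ (0:ℝ),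
      HasDerivAt (f k) ((a k - f k t) * (p k + q k * ∑ m, f m t)) t) :
    ∀ i j : Fin K, j < i → (p i, q i) ≠ (p j, q j) →
      ∀ t > (0:ℝ), f j t / a j < f i t / a i := by
  intro i j hji hne t ht
  have : Nonempty (Fin K) := ⟨i⟩
  have hf : IsBassSolution a p q f := ⟨hf0, hode⟩
  have hexponent :
      p j * t + q j * cumulativeAdoption f t < p i * t + q i * cumulativeAdoption f t :=
    add_mul_lt_add_mul_of_le_of_ne ht (hf.cumulativeAdoption_pos ha hp hq ht)
      (hpmono hji.le) (hqmono hji.le) hne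
  rw [hf.div_eq_one_sub_exp (ha i).ne' ht.le, hf.div_eq_one_sub_exp (ha j).ne' ht.le]
  gcongr

theorem group_adoption_monotone (K : ℕ) (hK : 1 ≤ K)
    (a p q : Fin K → ℝ)
    (ha : ∀ k, 0 < a k) (hsum : ∑ k, a k = 1)
    (hp : ∀ k, 0 < p k) (hq : ∀ k, 0 ≤ q k)
    (hpmono : Monotone p) (hqmono : Monotone q)
    (f : Fin K → ℝ → ℝ) (hf0 : ∀ k, f k 0 = 0)
    (hode : ∀ k, ∀ t ≥ (0:ℝ),
      HasDerivAt (f k) ((a k - f k t) * (p k + q k * ∑ m, f m t)) t) :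
    ∀ i j : Fin K, j < i → (p i, q i) ≠ (p j, q j) →
      ∀ t > (0:ℝ), f j t / a j < f i t / a i :=
  group_adoption_monotone_general K a p q ha hp hq hpmono hqmono f hf0 hode
end

section
/- For each M ∈ ℕ let u_k^{(M)} solve u_k' = 3^k(u_{k+1} - u_k) for 1 ≤ k ≤ M with u_{M+1} ≡ 0 and u_k(0) = 1. Then u_k^{(M)}(t) ≤ 2 e^{-3^k t} for all 1 ≤ k ≤ M and t ≥ 0; consequently for fixed k and t > (ln 2)/3^k, u_k^{(M)}(t) does not converge to 1 as M → ∞. -/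
open Real Filter

/-!
Write `c = a k` for the coefficient of the `k`-th equation and suppose the next component obeys
`u_{k+1}(t) ≤ 2 e^{-3ct}`. Then `g(t) = u_k(t) e^{ct} + e^{-2ct}` has
`g' = c (u_{k+1} e^{ct} - 2 e^{-2ct}) ≤ 0`, so `g(t) ≤ g(0) = 2` and `u_k(t) ≤ 2 e^{-ct}`.
Since `3 a k ≤ a (k + 1)`, this propagates downwards from `u_{M+1} = 0` to every component.
The bound does not depend on `M`, and for `t > log 2 / 3^k` it is below `1`, so no limit can be `1`.
-/

section Comparison

variable {a c : ℝ} {f h : ℝ → ℝ}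

lemma antitoneOn_mul_exp_add_exp (hc : 0 < c) (hac : 3 * c ≤ a)
    (hf : ∀ t, HasDerivAt f (c * (h t - f t)) t)
    (hh : ∀ t ≥ 0, h t ≤ 2 * exp (-a * t)) :
    AntitoneOn (fun t => f t * exp (c * t) + exp (-(2 * c) * t)) (Set.Ici 0) := by
  have hderiv : ∀ t, HasDerivAt (fun t => f t * exp (c * t) + exp (-(2 * c) * t))
      (c * (h t * exp (c * t) - 2 * exp (-(2 * c) * t))) t := fun t =>
    (((hf t).mul ((hasDerivAt_id' t).const_mul c).exp).add
      ((hasDerivAt_id' t).const_mul (-(2 * c))).exp).congr_deriv (by ring)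
  refine antitoneOn_of_hasDerivWithinAt_nonpos (convex_Ici 0)
    (continuous_iff_continuousAt.2 fun t => (hderiv t).continuousAt).continuousOn
    (fun t _ => (hderiv t).hasDerivWithinAt) fun t ht => ?_
  rw [interior_Ici, Set.mem_Ioi] at ht
  have hdecay : h t * exp (c * t) ≤ 2 * exp (-(2 * c) * t) :=
    calc h t * exp (c * t) ≤ 2 * exp (-a * t) * exp (c * t) := by gcongr; exact hh t ht.le
      _ ≤ 2 * exp (-(3 * c) * t) * exp (c * t) := by gcongr
      _ = 2 * exp (-(2 * c) * t) := by rw [mul_assoc, ← exp_add]; ring_nf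
  exact mul_nonpos_of_nonneg_of_nonpos hc.le (by linarith)

lemma le_two_mul_exp_of_hasDerivAt (hc : 0 < c) (hac : 3 * c ≤ a) (hf0 : f 0 = 1)
    (hf : ∀ t, HasDerivAt f (c * (h t - f t)) t)
    (hh : ∀ t ≥ 0, h t ≤ 2 * exp (-a * t)) {t : ℝ} (ht : 0 ≤ t) :
    f t ≤ 2 * exp (-c * t) := by
  have hmono := antitoneOn_mul_exp_add_exp hc hac hf hh Set.self_mem_Ici ht ht
  simp only [hf0, mul_zero, exp_zero, one_mul] at hmono
  rw [neg_mul, exp_neg, ← div_eq_mul_inv, le_div_iff₀ (exp_pos _)]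
  linarith [exp_pos (-(2 * c) * t)]

end Comparison

theorem le_two_mul_exp_of_hasDerivAt_chain {M : ℕ} {a : ℕ → ℝ} {v : ℕ → ℝ → ℝ}
    (ha : ∀ k, 0 < a k) (hgrowth : ∀ k, 3 * a k ≤ a (k + 1)) (htop : ∀ t, v (M + 1) t = 0)
    (hode : ∀ k, 1 ≤ k → k ≤ M → ∀ t, HasDerivAt (v k) (a k * (v (k + 1) t - v k t)) t)
    (h0 : ∀ k, 1 ≤ k → k ≤ M → v k 0 = 1) {k : ℕ} (hk : 1 ≤ k) (hkM : k ≤ M + 1) :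
    ∀ t ≥ 0, v k t ≤ 2 * exp (-a k * t) := by
  refine Nat.decreasingInduction' (P := fun j => ∀ t ≥ 0, v j t ≤ 2 * exp (-a j * t))
    (fun j hjM hkj ih t ht => ?_) hkM fun t _ => by rw [htop]; positivity
  exact le_two_mul_exp_of_hasDerivAt (ha j) (hgrowth j) (h0 j (by omega) (by omega))
    (hode j (by omega) (by omega)) ih ht

lemma two_mul_exp_neg_mul_lt_one {c t : ℝ} (hc : 0 < c) (ht : log 2 / c < t) :
    2 * exp (-c * t) < 1 :=
  calc 2 * exp (-c * t) < 2 * exp (-log 2) := by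
        gcongr; linarith [(div_lt_iff₀ hc).1 ht]
    _ = 1 := by rw [exp_neg, exp_log two_pos]; norm_num

theorem fast_coefficients_no_convergence (u : ℕ → ℕ → ℝ → ℝ)
    (htop : ∀ M : ℕ, ∀ t : ℝ, u M (M + 1) t = 0)
    (hode : ∀ M : ℕ, ∀ k : ℕ, 1 ≤ k → k ≤ M →
      ∀ t : ℝ, HasDerivAt (u M k) ((3:ℝ) ^ k * (u M (k + 1) t - u M k t)) t)
    (h0 : ∀ M : ℕ, ∀ k : ℕ, 1 ≤ k → k ≤ M → u M k 0 = 1) :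
    (∀ M : ℕ, ∀ k : ℕ, 1 ≤ k → k ≤ M → ∀ t ≥ (0:ℝ),
      u M k t ≤ 2 * Real.exp (-(3:ℝ) ^ k * t)) ∧
    (∀ k : ℕ, 1 ≤ k → ∀ t : ℝ, Real.log 2 / (3:ℝ) ^ k < t →
      ¬ Tendsto (fun M => u M k t) atTop (nhds 1)) := by
  have bound : ∀ M k, 1 ≤ k → k ≤ M → ∀ t ≥ (0:ℝ), u M k t ≤ 2 * exp (-(3:ℝ) ^ k * t) :=
    fun M k hk hkM => le_two_mul_exp_of_hasDerivAt_chain (a := fun k => (3:ℝ) ^ k)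
      (fun k => by positivity) (fun k => (pow_succ' (3:ℝ) k).ge) (htop M) (hode M) (h0 M) hk
      (by omega)
  refine ⟨bound, fun k hk t ht hlim => ?_⟩
  have ht0 : 0 ≤ t := le_trans (by positivity) ht.le
  have hbelow : ∀ᶠ M in atTop, u M k t ≤ 2 * exp (-(3:ℝ) ^ k * t) :=
    eventually_atTop.2 ⟨k, fun M hkM => bound M k hk hkM t ht0⟩
  exact (two_mul_exp_neg_mul_lt_one (by positivity) ht).not_ge (le_of_tendsto hlim hbelow)
end
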